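/- arXiv:2301.13767 — 6 statements merged into one kernel-verified Lean document; each statement's English description precedes it below -/
import Mathlib

section
/- Let (Ω, μ) be a finite probability space, and let f, h, Y : Ω → ℝ be random variables. Fix v ∈ ℝ and suppose the event S = {ω : f(ω) = v} has positive probability. If E[h·(Y - v) | S] ≥ α for some α > 0 and E[h² | S] > 0, then the function h'(ω) = v + η·h(ω) with η = α / E[h² | S] satisfies E[(f - Y)² - (h' - Y)² | S] ≥ α² / E[h² | S]. -/
/-! On `f = v` the gain in squared error from predicting `v + η h` instead of `v` is the
quadratic `2η E[h (Y - v)] - η² E[h²]`; with `E[h (Y - v)] ≥ α` and `η = α / E[h²]` it is at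
least `2α²/E[h²] - α²/E[h²]`. -/

open scoped Classical
open Finset

variable {Ω : Type*}

/-- Probability of an event `S` under weight function `μ` on a finite space. -/
noncomputable def prEv [Fintype Ω] (μ : Ω → ℝ) (S : Set Ω) : ℝ :=
  ∑ ω : Ω, if ω ∈ S then μ ω else 0

/-- Conditional expectation of `g` given the event `S`. -/
noncomputable def cexp [Fintype Ω] (μ : Ω → ℝ) (S : Set Ω) (g : Ω → ℝ) : ℝ :=
  (∑ ω : Ω, if ω ∈ S then μ ω * g ω else 0) / prEv μ S

/-- (Unconditional) expectation of `g`. -/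
noncomputable def exv [Fintype Ω] (μ : Ω → ℝ) (g : Ω → ℝ) : ℝ :=
  ∑ ω : Ω, μ ω * g ω

section cexp

variable [Fintype Ω] (μ : Ω → ℝ) (S : Set Ω)

lemma cexp_congr {g g' : Ω → ℝ} (hgg : ∀ ω ∈ S, g ω = g' ω) :
    cexp μ S g = cexp μ S g' := by
  unfold cexp
  congr 1
  refine Finset.sum_congr rfl fun ω _ => ?_
  split_ifs with hω
  · rw [hgg ω hω]
  · rfl

lemma cexp_linear_combination (g g' : Ω → ℝ) (a b : ℝ) :
    cexp μ S (fun ω => a * g ω + b * g' ω) = a * cexp μ S g + b * cexp μ S g' := by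
  unfold cexp
  rw [mul_div_assoc', mul_div_assoc', ← add_div, Finset.mul_sum, Finset.mul_sum,
    ← Finset.sum_add_distrib]
  congr 1
  refine Finset.sum_congr rfl fun ω _ => ?_
  split_ifs <;> ring

end cexp

lemma cexp_sq_error_gain_on_level_set [Fintype Ω] (μ : Ω → ℝ) (f h Y : Ω → ℝ) (v η : ℝ) :
    cexp μ {ω | f ω = v} (fun ω => (f ω - Y ω) ^ 2 - ((v + η * h ω) - Y ω) ^ 2) =
      2 * η * cexp μ {ω | f ω = v} (fun ω => h ω * (Y ω - v)) -
        η ^ 2 * cexp μ {ω | f ω = v} (fun ω => h ω ^ 2) := by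
  rw [sub_eq_add_neg _ (η ^ 2 * _), ← neg_mul, ← cexp_linear_combination]
  refine cexp_congr μ _ fun ω (hω : f ω = v) => ?_
  rw [hω]
  ring

theorem stmt_0_general [Fintype Ω] (μ : Ω → ℝ)
    (f h Y : Ω → ℝ) (v α : ℝ) (hα : 0 < α)
    (hcorr : α ≤ cexp μ {ω | f ω = v} (fun ω => h ω * (Y ω - v)))
    (hh2 : 0 < cexp μ {ω | f ω = v} (fun ω => h ω ^ 2)) :
    α ^ 2 / cexp μ {ω | f ω = v} (fun ω => h ω ^ 2) ≤
      cexp μ {ω | f ω = v} (fun ω =>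
        (f ω - Y ω) ^ 2 -
          ((v + (α / cexp μ {ω' | f ω' = v} (fun ω' => h ω' ^ 2)) * h ω) - Y ω) ^ 2) := by
  rw [cexp_sq_error_gain_on_level_set]
  set E := cexp μ {ω | f ω = v} (fun ω => h ω ^ 2)
  have hη : 0 ≤ 2 * (α / E) := by positivity
  calc α ^ 2 / E = 2 * (α / E) * α - (α / E) ^ 2 * E := by field_simp; ring
    _ ≤ _ := by gcongr

/-- a multicalibration violation of magnitude α by h on the level set
{f = v} yields an improving function h' = v + η·h with η = α / E[h² | f = v]. -/
theorem stmt_0 [Fintype Ω] (μ : Ω → ℝ) (hμ : ∀ ω, 0 ≤ μ ω) (hμ1 : ∑ ω : Ω, μ ω = 1)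
    (f h Y : Ω → ℝ) (v α : ℝ) (hα : 0 < α)
    (hS : 0 < prEv μ {ω | f ω = v})
    (hcorr : α ≤ cexp μ {ω | f ω = v} (fun ω => h ω * (Y ω - v)))
    (hh2 : 0 < cexp μ {ω | f ω = v} (fun ω => h ω ^ 2)) :
    α ^ 2 / cexp μ {ω | f ω = v} (fun ω => h ω ^ 2) ≤
      cexp μ {ω | f ω = v} (fun ω =>
        (f ω - Y ω) ^ 2 -
          ((v + (α / cexp μ {ω' | f ω' = v} (fun ω' => h ω' ^ 2)) * h ω) - Y ω) ^ 2) :=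
  stmt_0_general μ f h Y v α hα hcorr hh2
end

section
/- Let (Ω, μ) be a finite probability space, Y : Ω → [0,1], f : Ω → [0,1] with finite range of cardinality m, f* : Ω → [0,1]. Suppose: (i) for every v in the range of f with Pr[f=v] > 0, E[Y | f = v] = v (f is calibrated); (ii) for every subset S ⊆ Ω of the form S = {f = v} with Pr[S] > 0, if E[(f* - Y)² | S] < min_{c ∈ ℝ} E[(c - Y)² | S] then there exists h in a class H with E[(h - Y)² | S] < min_{c ∈ ℝ} E[(c - Y)² | S]; (iii) for every h ∈ H and every v in the range of f, E[h·(Y - v) | f = v] = 0 (f is multicalibrated with respect to H) — where H is closed under affine transformations. Then E[(f - Y)²] ≤ E[(f* - Y)²]. -/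
open scoped Classical
open Finset

variable {Ω : Type*}

/-- Numerator of the conditional expectation. -/
noncomputable def num [Fintype Ω] (μ : Ω → ℝ) (S : Set Ω) (g : Ω → ℝ) : ℝ :=
  ∑ ω : Ω, if ω ∈ S then μ ω * g ω else 0

lemma cexp_eq [Fintype Ω] (μ : Ω → ℝ) (S : Set Ω) (g : Ω → ℝ) :
    cexp μ S g = num μ S g / prEv μ S := rfl

lemma num_comb3 [Fintype Ω] (μ : Ω → ℝ) (S : Set Ω) (g₁ g₂ g₃ g₄ : Ω → ℝ) (a b c : ℝ)
    (h : ∀ ω ∈ S, g₁ ω = a * g₂ ω + b * g₃ ω + c * g₄ ω) :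
    num μ S g₁ = a * num μ S g₂ + b * num μ S g₃ + c * num μ S g₄ := by
  unfold num
  rw [Finset.mul_sum, Finset.mul_sum, Finset.mul_sum, ← Finset.sum_add_distrib,
    ← Finset.sum_add_distrib]
  apply Finset.sum_congr rfl
  intro ω _
  by_cases hω : ω ∈ S
  · simp only [if_pos hω]; rw [h ω hω]; ring
  · simp [hω]

lemma num_congr [Fintype Ω] (μ : Ω → ℝ) (S : Set Ω) (g₁ g₂ : Ω → ℝ)
    (h : ∀ ω ∈ S, g₁ ω = g₂ ω) : num μ S g₁ = num μ S g₂ := by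
  unfold num
  apply Finset.sum_congr rfl
  intro ω _
  by_cases hω : ω ∈ S
  · simp only [if_pos hω, h ω hω]
  · simp [hω]

lemma num_nonneg [Fintype Ω] (μ : Ω → ℝ) (hμ : ∀ ω, 0 ≤ μ ω) (S : Set Ω) (g : Ω → ℝ)
    (hg : ∀ ω, 0 ≤ g ω) : 0 ≤ num μ S g := by
  apply Finset.sum_nonneg
  intro ω _
  by_cases hω : ω ∈ S
  · simp only [if_pos hω]; exact mul_nonneg (hμ ω) (hg ω)
  · simp [hω]

lemma num_one [Fintype Ω] (μ : Ω → ℝ) (S : Set Ω) :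
    num μ S (fun _ => 1) = prEv μ S := by
  unfold num prEv
  apply Finset.sum_congr rfl
  intro ω _
  by_cases hω : ω ∈ S <;> simp [hω]

/-- if f is calibrated, the weak learning condition holds on the level
sets of f relative to f*, and f is multicalibrated with respect to H (closed under
affine transformations), then f has squared error at most that of f*. -/
theorem stmt_11 [Fintype Ω] (μ : Ω → ℝ) (hμ : ∀ ω, 0 ≤ μ ω) (hμ1 : ∑ ω : Ω, μ ω = 1)
    (Y f fstar : Ω → ℝ) (hY : ∀ ω, Y ω ∈ Set.Icc (0 : ℝ) 1)
    (hf : ∀ ω, f ω ∈ Set.Icc (0 : ℝ) 1) (hfs : ∀ ω, fstar ω ∈ Set.Icc (0 : ℝ) 1)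
    (H : Set (Ω → ℝ))
    (haff : ∀ h ∈ H, ∀ a b : ℝ, (fun ω => a * h ω + b) ∈ H)
    (hcal : ∀ v : ℝ, 0 < prEv μ {ω | f ω = v} → cexp μ {ω | f ω = v} Y = v)
    (hwl : ∀ v : ℝ, 0 < prEv μ {ω | f ω = v} →
      cexp μ {ω | f ω = v} (fun ω => (fstar ω - Y ω) ^ 2) <
          ⨅ c : ℝ, cexp μ {ω | f ω = v} (fun ω => (c - Y ω) ^ 2) →
        ∃ h ∈ H, cexp μ {ω | f ω = v} (fun ω => (h ω - Y ω) ^ 2) <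
          ⨅ c : ℝ, cexp μ {ω | f ω = v} (fun ω => (c - Y ω) ^ 2))
    (hmc : ∀ h ∈ H, ∀ v : ℝ, 0 < prEv μ {ω | f ω = v} →
      cexp μ {ω | f ω = v} (fun ω => h ω * (Y ω - v)) = 0) :
    exv μ (fun ω => (f ω - Y ω) ^ 2) ≤ exv μ (fun ω => (fstar ω - Y ω) ^ 2) := by
  classical
  have hdecomp : ∀ g : Ω → ℝ,
      exv μ g = ∑ v ∈ Finset.univ.image f, num μ {ω | f ω = v} g := by
    intro g
    unfold exv num
    rw [Finset.sum_comm]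
    apply Finset.sum_congr rfl
    intro ω _
    simp only [Set.mem_setOf_eq]
    rw [Finset.sum_ite_eq (Finset.univ.image f) (f ω) (fun _ => μ ω * g ω)]
    simp [Finset.mem_image_of_mem]
  rw [hdecomp, hdecomp]
  apply Finset.sum_le_sum
  intro v _
  set S := {ω | f ω = v} with hSdef
  rcases lt_or_ge 0 (prEv μ S) with hp | hple
  · -- positive probability level set
    have hp0 : prEv μ S ≠ 0 := ne_of_gt hp
    have hNY : num μ S Y = v * prEv μ S := by
      have h1 := hcal v hp
      rw [cexp_eq, div_eq_iff hp0] at h1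
      exact h1
    have hN1 : num μ S (fun _ => 1) = prEv μ S := num_one μ S
    have hNYv : num μ S (fun ω => Y ω - v) = 0 := by
      have := num_comb3 μ S (fun ω => Y ω - v) Y (fun _ => 1) (fun _ => 1) 1 (-v) 0
        (by intro ω _; ring)
      rw [this, hNY, hN1]; ring
    set K := num μ S (fun ω => (v - Y ω) ^ 2) with hKdef
    have hc : ∀ c : ℝ, cexp μ S (fun ω => (c - Y ω) ^ 2) = (c - v) ^ 2 + K / prEv μ S := by
      intro c
      have hnum : num μ S (fun ω => (c - Y ω) ^ 2)
          = 1 * K + (-2 * (c - v)) * num μ S (fun ω => Y ω - v)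
            + ((c - v) ^ 2) * num μ S (fun _ => 1) :=
        num_comb3 μ S _ _ _ _ _ _ _ (by intro ω _; ring)
      rw [cexp_eq, hnum, hNYv, hN1]
      field_simp
      ring
    have hbdd : BddBelow (Set.range fun c : ℝ => cexp μ S (fun ω => (c - Y ω) ^ 2)) := by
      refine ⟨K / prEv μ S, ?_⟩
      rintro x ⟨c, rfl⟩
      dsimp only
      rw [hc c]
      nlinarith [sq_nonneg (c - v)]
    have hinf : (⨅ c : ℝ, cexp μ S (fun ω => (c - Y ω) ^ 2)) = K / prEv μ S := by
      apply le_antisymm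
      · have h2 := ciInf_le hbdd v
        rw [hc v] at h2
        simpa using h2
      · apply le_ciInf
        intro c
        rw [hc c]
        nlinarith [sq_nonneg (c - v)]
    have hH : ∀ h ∈ H, K / prEv μ S ≤ cexp μ S (fun ω => (h ω - Y ω) ^ 2) := by
      intro h hh
      have hmc0 : num μ S (fun ω => h ω * (Y ω - v)) = 0 := by
        have h3 := hmc h hh v hp
        rw [cexp_eq, div_eq_iff hp0] at h3
        simpa using h3
      have hg4 : num μ S (fun ω => 2 * v * (Y ω - v) + (v - Y ω) ^ 2) = K := by
        have := num_comb3 μ S (fun ω => 2 * v * (Y ω - v) + (v - Y ω) ^ 2)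
          (fun ω => Y ω - v) (fun ω => (v - Y ω) ^ 2) (fun _ => 1) (2 * v) 1 0
          (by intro ω _; ring)
        rw [this, hNYv]; ring
      have hnum : num μ S (fun ω => (h ω - Y ω) ^ 2)
          = 1 * num μ S (fun ω => (h ω - v) ^ 2)
            + (-2) * num μ S (fun ω => h ω * (Y ω - v))
            + 1 * num μ S (fun ω => 2 * v * (Y ω - v) + (v - Y ω) ^ 2) :=
        num_comb3 μ S _ _ _ _ _ _ _ (by intro ω _; ring)
      have hsq : 0 ≤ num μ S (fun ω => (h ω - v) ^ 2) :=
        num_nonneg μ hμ S _ (fun ω => sq_nonneg _)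
      have hge : K ≤ num μ S (fun ω => (h ω - Y ω) ^ 2) := by
        rw [hnum, hmc0, hg4]; linarith
      rw [cexp_eq]
      exact (div_le_div_iff_of_pos_right hp).mpr hge
    have hstar : K / prEv μ S ≤ cexp μ S (fun ω => (fstar ω - Y ω) ^ 2) := by
      by_contra hlt
      push_neg at hlt
      obtain ⟨h, hh, hlt'⟩ := hwl v hp (by rwa [hinf])
      rw [hinf] at hlt'
      exact absurd hlt' (not_lt.mpr (hH h hh))
    have hf_eq : num μ S (fun ω => (f ω - Y ω) ^ 2) = K :=
      num_congr μ S _ _ (by intro ω hω; rw [show f ω = v from hω])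
    rw [cexp_eq] at hstar
    rw [hf_eq]
    calc K = (K / prEv μ S) * prEv μ S := by field_simp
      _ ≤ (num μ S (fun ω => (fstar ω - Y ω) ^ 2) / prEv μ S) * prEv μ S :=
          mul_le_mul_of_nonneg_right hstar hp.le
      _ = _ := by field_simp
  · -- zero probability level set
    have hpr0 : prEv μ S = 0 := le_antisymm hple (Finset.sum_nonneg fun ω _ => by
      by_cases hω : ω ∈ S <;> simp [hω, hμ ω])
    have hzero : ∀ ω ∈ S, μ ω = 0 := by
      intro ω hω
      have := (Finset.sum_eq_zero_iff_of_nonneg (fun ω _ => by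
        by_cases hω : ω ∈ S <;> simp [hω, hμ ω])).mp hpr0 ω (Finset.mem_univ ω)
      simpa [hω] using this
    have hnum0 : ∀ g : Ω → ℝ, num μ S g = 0 := by
      intro g
      apply Finset.sum_eq_zero
      intro ω _
      by_cases hω : ω ∈ S
      · simp [hω, hzero ω hω]
      · simp [hω]
    rw [hnum0, hnum0]
end

section
/- In the setting of the previous statement (f equals f* off S and equals ȳ_S = E[Y | S] on S, where f*(ω) = E[Y | ω] and S witnesses failure of the weak learning condition for class H), the predictor f is multicalibrated with respect to H: for every h ∈ H and every value v in the range of f with Pr[f = v] > 0, E[h·(Y - v) | f = v] = 0, provided H is closed under affine transformations. -/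
open scoped Classical
open Finset

variable {Ω : Type*}

/-- in the setting of Statement 12, the predictor equal to f* off S and
to the conditional mean of Y on S is multicalibrated with respect to H, provided H is
closed under affine transformations. -/
theorem stmt_13 [Fintype Ω] (μ : Ω → ℝ) (hμ : ∀ ω, 0 ≤ μ ω) (hμ1 : ∑ ω : Ω, μ ω = 1)
    (Y : Ω → ℝ) (hY : ∀ ω, Y ω ∈ Set.Icc (0 : ℝ) 1)
    (fstar : Ω → ℝ)
    (hopt : ∀ g : Ω → ℝ,
      exv μ (fun ω => (fstar ω - Y ω) ^ 2) ≤ exv μ (fun ω => (g ω - Y ω) ^ 2))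
    (H : Set (Ω → ℝ))
    (haff : ∀ h ∈ H, ∀ a b : ℝ, (fun ω => a * h ω + b) ∈ H)
    (S : Set Ω) (hS : 0 < prEv μ S)
    (hgap : cexp μ S (fun ω => (fstar ω - Y ω) ^ 2) <
      ⨅ c : ℝ, cexp μ S (fun ω => (c - Y ω) ^ 2))
    (hfail : ∀ h ∈ H,
      (⨅ c : ℝ, cexp μ S (fun ω => (c - Y ω) ^ 2)) ≤
        cexp μ S (fun ω => (h ω - Y ω) ^ 2)) :
    ∀ h ∈ H, ∀ v : ℝ,
      0 < prEv μ {ω | (if ω ∈ S then cexp μ S Y else fstar ω) = v} →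
        cexp μ {ω | (if ω ∈ S then cexp μ S Y else fstar ω) = v}
          (fun ω => h ω * (Y ω - v)) = 0 := by
  
  classical
  intro h hH v _hvT
  set ybar : ℝ := cexp μ S Y with hybar
  -- weight function
  set w : Ω → ℝ := fun ω => if ω ∈ S then μ ω else 0 with hw
  have hw0 : ∀ ω, 0 ≤ w ω := by
    intro ω; by_cases hωS : ω ∈ S <;> simp [hw, hωS, hμ ω]
  have hNp : ∀ g : Ω → ℝ,
      (∑ ω : Ω, if ω ∈ S then μ ω * g ω else 0) = ∑ ω : Ω, w ω * g ω := by
    intro g; apply Finset.sum_congr rfl; intro ω _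
    by_cases hωS : ω ∈ S <;> simp [hw, hωS]
  have hpw : prEv μ S = ∑ ω : Ω, w ω := by
    unfold prEv; apply Finset.sum_congr rfl; intro ω _
    by_cases hωS : ω ∈ S <;> simp [hw, hωS]
  set p : ℝ := ∑ ω : Ω, w ω with hpdef
  have hp : 0 < p := hpw ▸ hS
  have hcexp : ∀ g : Ω → ℝ, cexp μ S g = (∑ ω : Ω, w ω * g ω) / p := by
    intro g; unfold cexp; rw [hNp, hpw]
  set nY : ℝ := ∑ ω : Ω, w ω * Y ω with hnY
  have hybar' : ybar = nY / p := by rw [hybar, hcexp]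
  have hybarp : ybar * p = nY := by rw [hybar']; field_simp
  -- f* = Y on the support of μ
  have hfY : ∀ ω : Ω, 0 < μ ω → fstar ω = Y ω := by
    intro ω hω
    have h0 : exv μ (fun ω => (fstar ω - Y ω) ^ 2) ≤ 0 := by
      have := hopt Y; simpa [exv] using this
    have hterm : ∀ ω' : Ω, 0 ≤ μ ω' * (fstar ω' - Y ω') ^ 2 :=
      fun ω' => mul_nonneg (hμ ω') (sq_nonneg _)
    have hsum0 : exv μ (fun ω => (fstar ω - Y ω) ^ 2) = 0 :=
      le_antisymm h0 (Finset.sum_nonneg fun ω' _ => hterm ω')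
    have hz : μ ω * (fstar ω - Y ω) ^ 2 = 0 := by
      have := (Finset.sum_eq_zero_iff_of_nonneg (fun ω' _ => hterm ω')).mp hsum0
      exact this ω (Finset.mem_univ ω)
    have h2 : (fstar ω - Y ω) ^ 2 = 0 := by
      rcases mul_eq_zero.mp hz with h' | h'
      · exact absurd h' (ne_of_gt hω)
      · exact h'
    have := pow_eq_zero_iff (n := 2) (by norm_num) |>.mp h2
    linarith [sub_eq_zero.mp this]
  -- quadratic expansion of numerator
  have hquad : ∀ c : ℝ,
      (∑ ω : Ω, w ω * (c - Y ω) ^ 2)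
        = c ^ 2 * p - 2 * c * nY + ∑ ω : Ω, w ω * (Y ω) ^ 2 := by
    intro c
    rw [hpdef, hnY, Finset.mul_sum, Finset.mul_sum, ← Finset.sum_sub_distrib,
      ← Finset.sum_add_distrib]
    apply Finset.sum_congr rfl; intro ω _; ring
  -- completing the square: ybar minimizes
  have key1 : ∀ c : ℝ, cexp μ S (fun ω => (ybar - Y ω) ^ 2)
      ≤ cexp μ S (fun ω => (c - Y ω) ^ 2) := by
    intro c
    rw [hcexp, hcexp]
    have hnum : (∑ ω : Ω, w ω * (ybar - Y ω) ^ 2) ≤ ∑ ω : Ω, w ω * (c - Y ω) ^ 2 := by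
      rw [hquad, hquad, ← hybarp]
      nlinarith [mul_nonneg hp.le (sq_nonneg (c - ybar))]
    exact (div_le_div_iff_of_pos_right hp).mpr hnum
  -- the infimum is at least the variance
  have hVarInf : cexp μ S (fun ω => (ybar - Y ω) ^ 2)
      ≤ ⨅ c : ℝ, cexp μ S (fun ω => (c - Y ω) ^ 2) := le_ciInf key1
  -- best affine predictor using h is no better than constant
  set hbar : ℝ := (∑ ω : Ω, w ω * h ω) / p with hhbar
  set A : ℝ := ∑ ω : Ω, w ω * (h ω - hbar) ^ 2 with hA
  set B : ℝ := ∑ ω : Ω, w ω * ((h ω - hbar) * (ybar - Y ω)) with hB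
  have hA0 : 0 ≤ A := Finset.sum_nonneg fun ω _ => mul_nonneg (hw0 ω) (sq_nonneg _)
  have hkey : ∀ a : ℝ, 0 ≤ a ^ 2 * A + 2 * a * B := by
    intro a
    have hmem := haff h hH a (ybar - a * hbar)
    have hle := (hVarInf.trans (hfail _ hmem))
    rw [hcexp, hcexp] at hle
    have hnum : (∑ ω : Ω, w ω * (ybar - Y ω) ^ 2)
        ≤ ∑ ω : Ω, w ω * ((fun ω => a * h ω + (ybar - a * hbar)) ω - Y ω) ^ 2 :=
      (div_le_div_iff_of_pos_right hp).mp hle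
    have hexp : (∑ ω : Ω, w ω * ((fun ω => a * h ω + (ybar - a * hbar)) ω - Y ω) ^ 2)
        = a ^ 2 * A + 2 * a * B + ∑ ω : Ω, w ω * (ybar - Y ω) ^ 2 := by
      rw [hA, hB, Finset.mul_sum, Finset.mul_sum, ← Finset.sum_add_distrib,
        ← Finset.sum_add_distrib]
      apply Finset.sum_congr rfl; intro ω _; ring
    rw [hexp] at hnum
    linarith
  -- hence B = 0
  have hBzero : B = 0 := by
    have hd := discrim_le_zero (a := A) (b := 2 * B) (c := (0:ℝ)) (fun x => by nlinarith [hkey x])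
    rw [discrim] at hd
    nlinarith [sq_nonneg (2 * B)]
  -- mean-zero facts
  have hsumY0 : (∑ ω : Ω, w ω * (ybar - Y ω)) = 0 := by
    have : (∑ ω : Ω, w ω * (ybar - Y ω)) = ybar * p - nY := by
      rw [hpdef, hnY, Finset.mul_sum, ← Finset.sum_sub_distrib]
      apply Finset.sum_congr rfl; intro ω _; ring
    rw [this, hybarp]; ring
  have hBsplit : B = (∑ ω : Ω, w ω * (h ω * (ybar - Y ω)))
      - hbar * ∑ ω : Ω, w ω * (ybar - Y ω) := by
    rw [hB, Finset.mul_sum, ← Finset.sum_sub_distrib]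
    apply Finset.sum_congr rfl; intro ω _; ring
  have hcov : (∑ ω : Ω, w ω * (h ω * (Y ω - ybar))) = 0 := by
    have h1 : (∑ ω : Ω, w ω * (h ω * (Y ω - ybar)))
        = -(∑ ω : Ω, w ω * (h ω * (ybar - Y ω))) := by
      rw [← Finset.sum_neg_distrib]
      apply Finset.sum_congr rfl; intro ω _; ring
    rw [h1]
    have := hBsplit
    rw [hsumY0, hBzero] at this
    linarith
  -- finally: the numerator over the level set vanishes
  unfold cexp
  have hnum0 : (∑ ω : Ω, if ω ∈ {ω | (if ω ∈ S then ybar else fstar ω) = v}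
      then μ ω * ((fun ω => h ω * (Y ω - v)) ω) else 0) = 0 := by
    have hstep : ∀ ω : Ω, (if ω ∈ {ω | (if ω ∈ S then ybar else fstar ω) = v}
        then μ ω * ((fun ω => h ω * (Y ω - v)) ω) else 0)
        = if ybar = v ∧ ω ∈ S then w ω * (h ω * (Y ω - ybar)) else 0 := by
      intro ω
      by_cases hωS : ω ∈ S
      · simp only [Set.mem_setOf_eq, if_pos hωS]
        by_cases hyv : ybar = v
        · simp [hyv, hωS, hw]
        · simp [hyv, hωS]
      · simp only [Set.mem_setOf_eq, if_neg hωS]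
        have hr : ¬(ybar = v ∧ ω ∈ S) := fun hc => hωS hc.2
        rw [if_neg hr]
        by_cases hωT : fstar ω = v
        · rw [if_pos hωT]
          rcases lt_or_eq_of_le (hμ ω) with hμω | hμω
          · have hYv : Y ω = v := by rw [← hfY ω hμω]; exact hωT
            rw [hYv]; ring
          · rw [← hμω]; ring
        · rw [if_neg hωT]
    rw [Finset.sum_congr rfl fun ω _ => hstep ω]
    by_cases hyv : ybar = v
    · have : (∑ ω : Ω, if ybar = v ∧ ω ∈ S then w ω * (h ω * (Y ω - ybar)) else 0)
          = ∑ ω : Ω, w ω * (h ω * (Y ω - ybar)) := by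
        apply Finset.sum_congr rfl; intro ω _
        by_cases hωS : ω ∈ S
        · rw [if_pos ⟨hyv, hωS⟩]
        · rw [if_neg (fun hc => hωS hc.2)]
          have : w ω = 0 := by simp [hw, hωS]
          rw [this]; ring
      rw [this, hcov]
    · apply Finset.sum_eq_zero; intro ω _
      rw [if_neg (fun hc => hyv hc.1)]
  rw [hnum0, zero_div]
end

section
/- Let (Ω, μ) be a finite probability space, Y : Ω → [0,1], f : Ω → [0,1] with finite range, and H, C classes of functions closed under affine transformations. Suppose f is calibrated and multicalibrated with respect to H, and H satisfies the weak learning condition relative to C (as in Definition: for every positive-probability S, if some c ∈ C beats the best constant predictor on S in squared error, then some h ∈ H does too). Then E[(f - Y)²] ≤ min_{c ∈ C} E[(c - Y)²]. -/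
open scoped Classical
open Finset

variable {Ω : Type*}

lemma prEv_nonneg [Fintype Ω] (μ : Ω → ℝ) (hμ : ∀ ω, 0 ≤ μ ω) (S : Set Ω) :
    0 ≤ prEv μ S := by
  apply Finset.sum_nonneg
  intro ω _
  split_ifs
  · exact hμ ω
  · exact le_refl 0

lemma wsum_nonneg [Fintype Ω] (μ : Ω → ℝ) (hμ : ∀ ω, 0 ≤ μ ω) (S : Set Ω)
    (g : Ω → ℝ) (hg : ∀ ω, 0 ≤ g ω) :
    0 ≤ ∑ ω : Ω, if ω ∈ S then μ ω * g ω else 0 := by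
  apply Finset.sum_nonneg
  intro ω _
  split_ifs
  · exact mul_nonneg (hμ ω) (hg ω)
  · exact le_refl 0

lemma wsum_zero_of_pr_zero [Fintype Ω] (μ : Ω → ℝ) (hμ : ∀ ω, 0 ≤ μ ω) (S : Set Ω)
    (g : Ω → ℝ) (hp : prEv μ S = 0) :
    (∑ ω : Ω, if ω ∈ S then μ ω * g ω else 0) = 0 := by
  have hz : ∀ ω, ω ∈ S → μ ω = 0 := by
    intro ω hωS
    have := (Finset.sum_eq_zero_iff_of_nonneg (by
      intro x _
      split_ifs with h
      · exact hμ x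
      · exact le_refl 0)).mp hp ω (Finset.mem_univ ω)
    simpa [hωS] using this
  apply Finset.sum_eq_zero
  intro ω _
  split_ifs with h
  · rw [hz ω h, zero_mul]
  · rfl

lemma exv_decomp [Fintype Ω] (μ : Ω → ℝ) (f g : Ω → ℝ) :
    exv μ g = ∑ v ∈ Finset.univ.image f,
      ∑ ω : Ω, if ω ∈ {ω | f ω = v} then μ ω * g ω else 0 := by
  rw [Finset.sum_comm]
  unfold exv
  apply Finset.sum_congr rfl
  intro ω _
  simp only [Set.mem_setOf_eq]
  rw [Finset.sum_ite_eq (Finset.univ.image f) (f ω) (fun _ => μ ω * g ω)]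
  simp [Finset.mem_image_of_mem]

/-- a calibrated predictor multicalibrated with respect to H, where H
satisfies the weak learning condition relative to C, has squared error at most that
of every function in C. -/
theorem stmt_15 [Fintype Ω] (μ : Ω → ℝ) (hμ : ∀ ω, 0 ≤ μ ω) (hμ1 : ∑ ω : Ω, μ ω = 1)
    (Y f : Ω → ℝ) (hY : ∀ ω, Y ω ∈ Set.Icc (0 : ℝ) 1) (hf : ∀ ω, f ω ∈ Set.Icc (0 : ℝ) 1)
    (H C : Set (Ω → ℝ))
    (haffH : ∀ h ∈ H, ∀ a b : ℝ, (fun ω => a * h ω + b) ∈ H)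
    (haffC : ∀ c ∈ C, ∀ a b : ℝ, (fun ω => a * c ω + b) ∈ C)
    (hcal : ∀ v : ℝ, 0 < prEv μ {ω | f ω = v} → cexp μ {ω | f ω = v} Y = v)
    (hmcH : ∀ h ∈ H, ∀ v : ℝ, 0 < prEv μ {ω | f ω = v} →
      cexp μ {ω | f ω = v} (fun ω => h ω * (Y ω - v)) = 0)
    (hwl : ∀ S : Set Ω, 0 < prEv μ S →
      (∃ c ∈ C, cexp μ S (fun ω => (c ω - Y ω) ^ 2) <
          cexp μ S (fun ω => (cexp μ S Y - Y ω) ^ 2)) →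
        ∃ h ∈ H, cexp μ S (fun ω => (h ω - Y ω) ^ 2) <
          cexp μ S (fun ω => (cexp μ S Y - Y ω) ^ 2)) :
    ∀ c ∈ C, exv μ (fun ω => (f ω - Y ω) ^ 2) ≤ exv μ (fun ω => (c ω - Y ω) ^ 2) := by
  intro c hc
  rw [exv_decomp μ f, exv_decomp μ f]
  apply Finset.sum_le_sum
  intro v _
  -- on the level set, (f ω - Y ω)^2 = (v - Y ω)^2
  have hfv : (∑ ω : Ω, if ω ∈ {ω | f ω = v} then μ ω * (f ω - Y ω) ^ 2 else 0)
      = ∑ ω : Ω, if ω ∈ {ω | f ω = v} then μ ω * (v - Y ω) ^ 2 else 0 := by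
    apply Finset.sum_congr rfl
    intro ω _
    split_ifs with h
    · have hfω : f ω = v := h
      rw [hfω]
    · rfl
  rw [hfv]
  rcases lt_or_eq_of_le (prEv_nonneg μ hμ {ω | f ω = v}) with hp | hp
  · -- positive probability level set
    have hpne : prEv μ {ω | f ω = v} ≠ 0 := ne_of_gt hp
    have hWY : (∑ ω : Ω, if ω ∈ {ω | f ω = v} then μ ω * Y ω else 0)
        = v * prEv μ {ω | f ω = v} := by
      have hc' := hcal v hp
      unfold cexp at hc'
      rw [div_eq_iff hpne] at hc'
      exact hc'
    by_contra hcon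
    push_neg at hcon
    have hclt : cexp μ {ω | f ω = v} (fun ω => (c ω - Y ω) ^ 2)
        < cexp μ {ω | f ω = v} (fun ω => (v - Y ω) ^ 2) := by
      unfold cexp
      exact (div_lt_div_iff_of_pos_right hp).mpr hcon
    obtain ⟨h, hH, hlth⟩ := hwl {ω | f ω = v} hp ⟨c, hc, by rw [hcal v hp]; exact hclt⟩
    rw [hcal v hp] at hlth
    have hWh : (∑ ω : Ω, if ω ∈ {ω | f ω = v} then μ ω * (h ω * (Y ω - v)) else 0) = 0 := by
      have hm := hmcH h hH v hp
      unfold cexp at hm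
      exact (div_eq_zero_iff.mp hm).resolve_right hpne
    have hdecomp : (∑ ω : Ω, if ω ∈ {ω | f ω = v} then μ ω * (h ω - Y ω) ^ 2 else 0)
        = (∑ ω : Ω, if ω ∈ {ω | f ω = v} then μ ω * (h ω - v) ^ 2 else 0)
          + (∑ ω : Ω, if ω ∈ {ω | f ω = v} then μ ω * (v - Y ω) ^ 2 else 0)
          - 2 * (∑ ω : Ω, if ω ∈ {ω | f ω = v} then μ ω * (h ω * (Y ω - v)) else 0)
          + 2 * v * (∑ ω : Ω, if ω ∈ {ω | f ω = v} then μ ω * Y ω else 0)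
          - 2 * v ^ 2 * prEv μ {ω | f ω = v} := by
      unfold prEv
      rw [Finset.mul_sum, Finset.mul_sum, Finset.mul_sum,
        ← Finset.sum_add_distrib, ← Finset.sum_sub_distrib, ← Finset.sum_add_distrib,
        ← Finset.sum_sub_distrib]
      apply Finset.sum_congr rfl
      intro ω _
      split_ifs <;> ring
    rw [hWh, hWY] at hdecomp
    -- from hlth, the weighted sums compare
    have hWlt : (∑ ω : Ω, if ω ∈ {ω | f ω = v} then μ ω * (h ω - Y ω) ^ 2 else 0)
        < ∑ ω : Ω, if ω ∈ {ω | f ω = v} then μ ω * (v - Y ω) ^ 2 else 0 := by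
      unfold cexp at hlth
      exact (div_lt_div_iff_of_pos_right hp).mp hlth
    have hnn : 0 ≤ ∑ ω : Ω, if ω ∈ {ω | f ω = v} then μ ω * (h ω - v) ^ 2 else 0 :=
      wsum_nonneg μ hμ _ _ (fun ω => sq_nonneg _)
    nlinarith [hdecomp, hWlt, hnn]
  · -- zero probability: both weighted sums vanish
    rw [wsum_zero_of_pr_zero μ hμ _ _ hp.symm, wsum_zero_of_pr_zero μ hμ _ _ hp.symm]
end

section
/- Let (Ω, μ) be a finite probability space, Y, h : Ω → ℝ random variables, v ∈ ℝ, and S an event with positive probability. If E[h·(Y - v) | S] ≥ α > 0 and h(ω)² ≤ B for all ω, then E[h² | S] ≥ α², and consequently the function h' = v + η·h with η = α/E[h² | S] satisfies |η| ≤ 1/α and sup_ω h'(ω)² ≤ (1 + √B/α)² whenever |v| ≤ 1. -/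
open scoped Classical
open Finset

variable {Ω : Type*}

/-- norm-controlled improvement lemma. From a conditional correlation
lower bound α with a B-bounded h, one gets E[h² | S] ≥ α², |η| ≤ 1/α for
η = α/E[h² | S], and a sup-norm bound on h' = v + η·h. -/
theorem stmt_17 [Fintype Ω] (μ : Ω → ℝ) (hμ : ∀ ω, 0 ≤ μ ω) (hμ1 : ∑ ω : Ω, μ ω = 1)
    (Y h : Ω → ℝ) (hY : ∀ ω, Y ω ∈ Set.Icc (0 : ℝ) 1)
    (v : ℝ) (hv : v ∈ Set.Icc (0 : ℝ) 1)
    (S : Set Ω) (hS : 0 < prEv μ S)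
    (α B : ℝ) (hα : 0 < α) (hB : 0 ≤ B)
    (hhB : ∀ ω, (h ω) ^ 2 ≤ B)
    (hcorr : α ≤ cexp μ S (fun ω => h ω * (Y ω - v))) :
    α ^ 2 ≤ cexp μ S (fun ω => (h ω) ^ 2) ∧
      |α / cexp μ S (fun ω => (h ω) ^ 2)| ≤ 1 / α ∧
      ∀ ω, (v + (α / cexp μ S (fun ω' => (h ω') ^ 2)) * h ω) ^ 2 ≤
        (1 + Real.sqrt B / α) ^ 2 := by
  set p := prEv μ S with hp
  set w : Ω → ℝ := fun ω => if ω ∈ S then μ ω else 0 with hw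
  have hwnn : ∀ ω, 0 ≤ w ω := fun ω => by
    simp only [hw]; split; exacts [hμ ω, le_refl 0]
  have hwsum : ∑ ω : Ω, w ω = p := rfl
  -- Step 1: α * p ≤ ∑ w |h|
  have hαp : α * p ≤ ∑ ω : Ω, w ω * |h ω| := by
    have h1 : α * p ≤ ∑ ω : Ω, w ω * (h ω * (Y ω - v)) := by
      have := hcorr
      rw [cexp, le_div_iff₀ hS] at this
      calc α * p ≤ ∑ ω : Ω, if ω ∈ S then μ ω * (h ω * (Y ω - v)) else 0 := this
        _ = ∑ ω : Ω, w ω * (h ω * (Y ω - v)) := by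
            apply Finset.sum_congr rfl; intro ω _
            simp only [hw]; split <;> simp
    refine h1.trans (Finset.sum_le_sum fun ω _ => ?_)
    apply mul_le_mul_of_nonneg_left _ (hwnn ω)
    calc h ω * (Y ω - v) ≤ |h ω * (Y ω - v)| := le_abs_self _
      _ = |h ω| * |Y ω - v| := abs_mul _ _
      _ ≤ |h ω| * 1 := by
          apply mul_le_mul_of_nonneg_left _ (abs_nonneg _)
          rw [abs_le]
          obtain ⟨hY0, hY1⟩ := hY ω
          obtain ⟨hv0, hv1⟩ := hv
          constructor <;> linarith
      _ = |h ω| := mul_one _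
  -- Step 2: Cauchy-Schwarz
  have hCS : (∑ ω : Ω, w ω * |h ω|) ^ 2 ≤ p * ∑ ω : Ω, w ω * (h ω) ^ 2 := by
    have := sum_mul_sq_le_sq_mul_sq Finset.univ (fun ω => Real.sqrt (w ω))
      (fun ω => Real.sqrt (w ω) * |h ω|)
    calc (∑ ω : Ω, w ω * |h ω|) ^ 2
        = (∑ ω : Ω, Real.sqrt (w ω) * (Real.sqrt (w ω) * |h ω|)) ^ 2 := by
          congr 1; apply Finset.sum_congr rfl; intro ω _
          rw [← mul_assoc, Real.mul_self_sqrt (hwnn ω)]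
      _ ≤ (∑ ω : Ω, Real.sqrt (w ω) ^ 2) * ∑ ω : Ω, (Real.sqrt (w ω) * |h ω|) ^ 2 := this
      _ = p * ∑ ω : Ω, w ω * (h ω) ^ 2 := by
          congr 1
          · rw [← hwsum]; apply Finset.sum_congr rfl; intro ω _
            exact Real.sq_sqrt (hwnn ω)
          · apply Finset.sum_congr rfl; intro ω _
            rw [mul_pow, Real.sq_sqrt (hwnn ω), sq_abs]
  have hcexp2 : cexp μ S (fun ω => (h ω) ^ 2) = (∑ ω : Ω, w ω * (h ω) ^ 2) / p := by
    rw [cexp]; congr 1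
    apply Finset.sum_congr rfl; intro ω _
    simp only [hw]; split <;> simp
  have hmain : α ^ 2 ≤ cexp μ S (fun ω => (h ω) ^ 2) := by
    rw [hcexp2, le_div_iff₀ hS]
    have h2 : (α * p) ^ 2 ≤ p * ∑ ω : Ω, w ω * (h ω) ^ 2 := by
      refine le_trans ?_ hCS
      have hnn : 0 ≤ α * p := le_of_lt (mul_pos hα hS)
      exact pow_le_pow_left₀ hnn hαp 2
    nlinarith [hS]
  refine ⟨hmain, ?_, ?_⟩
  · have hE2pos : 0 < cexp μ S (fun ω => (h ω) ^ 2) := lt_of_lt_of_le (by positivity) hmain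
    rw [abs_of_nonneg (by positivity), div_le_div_iff₀ hE2pos hα]
    nlinarith
  · intro ω
    have hE2pos : 0 < cexp μ S (fun ω' => (h ω') ^ 2) := lt_of_lt_of_le (by positivity) hmain
    have habs : |h ω| ≤ Real.sqrt B := by
      rw [← Real.sqrt_sq_eq_abs]
      exact Real.sqrt_le_sqrt (hhB ω)
    have hη : α / cexp μ S (fun ω' => (h ω') ^ 2) ≤ 1 / α := by
      rw [div_le_div_iff₀ hE2pos hα]; nlinarith
    have key : |v + (α / cexp μ S (fun ω' => (h ω') ^ 2)) * h ω| ≤ 1 + Real.sqrt B / α := by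
      calc |v + (α / cexp μ S (fun ω' => (h ω') ^ 2)) * h ω|
          ≤ |v| + |(α / cexp μ S (fun ω' => (h ω') ^ 2)) * h ω| := abs_add_le _ _
        _ ≤ 1 + Real.sqrt B / α := by
            apply add_le_add
            · rw [abs_le]; obtain ⟨hv0, hv1⟩ := hv; constructor <;> linarith
            · rw [abs_mul, abs_of_nonneg (by positivity)]
              calc (α / cexp μ S (fun ω' => (h ω') ^ 2)) * |h ω|
                  ≤ (1 / α) * Real.sqrt B :=
                    mul_le_mul hη habs (abs_nonneg _) (by positivity)
                _ = Real.sqrt B / α := by ring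
    calc (v + (α / cexp μ S (fun ω' => (h ω') ^ 2)) * h ω) ^ 2
        = |v + (α / cexp μ S (fun ω' => (h ω') ^ 2)) * h ω| ^ 2 := (sq_abs _).symm
      _ ≤ (1 + Real.sqrt B / α) ^ 2 := pow_le_pow_left₀ (abs_nonneg _) key 2
end

section
/- Let (Ω, μ) be a finite probability space, Y : Ω → [0,1], and f : Ω → [0,1] with finite range of cardinality m satisfying the mean squared calibration error bound K₂(f) = Σ_v Pr[f=v]·(E[Y - v | f=v])² ≤ α. Let f*(ω) = E[Y | ω]. Suppose for some v with Pr[f = v] > γ/m we have E[(f* - Y)² | f = v] < E[(f - Y)² | f = v] - 2γ, and α ≤ γ³/(16m). Then with ȳ_v = E[Y | f = v], E[(f* - Y)² | f = v] < E[(ȳ_v - Y)² | f = v] - γ. -/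
open scoped Classical
open Finset

variable {Ω : Type*}

/-- under K₂(f) ≤ α ≤ γ³/(16m), 2γ-suboptimality of f relative to f*
on a level set of mass more than γ/m transfers to γ-suboptimality of the best
constant predictor ȳ_v on that level set. -/
theorem stmt_19 [Fintype Ω] (μ : Ω → ℝ) (hμ : ∀ ω, 0 ≤ μ ω) (hμ1 : ∑ ω : Ω, μ ω = 1)
    (Y f : Ω → ℝ) (hY : ∀ ω, Y ω ∈ Set.Icc (0 : ℝ) 1) (hf : ∀ ω, f ω ∈ Set.Icc (0 : ℝ) 1)
    (fstar : Ω → ℝ) (hfs : ∀ ω, fstar ω ∈ Set.Icc (0 : ℝ) 1)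
    (m : ℕ) (hm : (Finset.image f Finset.univ).card = m)
    (γ α : ℝ) (hγ : 0 < γ) (hα : α ≤ γ ^ 3 / (16 * m))
    (hK : ∑ v ∈ Finset.image f Finset.univ,
        prEv μ {ω | f ω = v} * (cexp μ {ω | f ω = v} (fun ω => Y ω - v)) ^ 2 ≤ α)
    (v : ℝ) (hpv : γ / m < prEv μ {ω | f ω = v})
    (hsub : cexp μ {ω | f ω = v} (fun ω => (fstar ω - Y ω) ^ 2) <
      cexp μ {ω | f ω = v} (fun ω => (f ω - Y ω) ^ 2) - 2 * γ) :
    cexp μ {ω | f ω = v} (fun ω => (fstar ω - Y ω) ^ 2) <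
      cexp μ {ω | f ω = v} (fun ω => (cexp μ {ω' | f ω' = v} Y - Y ω) ^ 2) - γ := by
  classical
  have hpconv : ∀ g : Ω → ℝ, cexp μ {ω | f ω = v} g
      = (∑ ω : Ω, if f ω = v then μ ω * g ω else 0) / prEv μ {ω | f ω = v} := by
    intro g
    simp only [cexp, Set.mem_setOf_eq]
  have hprEv : prEv μ {ω | f ω = v} = ∑ ω : Ω, if f ω = v then μ ω else 0 := by
    simp only [prEv, Set.mem_setOf_eq]
  set p : ℝ := prEv μ {ω | f ω = v} with hpdef
  have hp0 : 0 < p := lt_of_le_of_lt (div_nonneg hγ.le (Nat.cast_nonneg m)) hpv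
  have hvmem : v ∈ Finset.image f Finset.univ := by
    by_contra hv
    have hne : ∀ ω : Ω, f ω ≠ v := by
      intro ω hω
      exact hv (Finset.mem_image.2 ⟨ω, Finset.mem_univ ω, hω⟩)
    have : p = 0 := by
      rw [hprEv]
      exact Finset.sum_eq_zero fun ω _ => if_neg (hne ω)
    linarith
  have hm1 : (1 : ℝ) ≤ (m : ℝ) := by
    have : 1 ≤ (Finset.image f Finset.univ).card := Finset.card_pos.2 ⟨v, hvmem⟩
    exact_mod_cast hm ▸ this
  have hm0 : (0 : ℝ) < (m : ℝ) := lt_of_lt_of_le one_pos hm1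
  set SY : ℝ := ∑ ω : Ω, if f ω = v then μ ω * Y ω else 0 with hSY
  set SY2 : ℝ := ∑ ω : Ω, if f ω = v then μ ω * (Y ω) ^ 2 else 0 with hSY2
  have expand : ∀ a : ℝ, (∑ ω : Ω, if f ω = v then μ ω * (a - Y ω) ^ 2 else 0)
      = a ^ 2 * p - 2 * a * SY + SY2 := by
    intro a
    rw [hprEv, hSY, hSY2, Finset.mul_sum, Finset.mul_sum,
      ← Finset.sum_sub_distrib, ← Finset.sum_add_distrib]
    refine Finset.sum_congr rfl fun ω _ => ?_
    by_cases h : f ω = v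
    · simp only [if_pos h]; ring
    · simp only [if_neg h]; ring
  set ybar : ℝ := cexp μ {ω' | f ω' = v} Y with hybar
  have hybar' : ybar = SY / p := by rw [hybar, hpconv]
  have hca : ∀ a : ℝ, cexp μ {ω | f ω = v} (fun ω => (a - Y ω) ^ 2)
      = a ^ 2 - 2 * a * ybar + SY2 / p := by
    intro a
    rw [hpconv, expand, hybar']
    field_simp
  have hfv : cexp μ {ω | f ω = v} (fun ω => (f ω - Y ω) ^ 2)
      = cexp μ {ω | f ω = v} (fun ω => (v - Y ω) ^ 2) := by
    rw [hpconv, hpconv]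
    congr 1
    refine Finset.sum_congr rfl fun ω _ => ?_
    by_cases h : f ω = v
    · simp only [if_pos h, h]
    · simp only [if_neg h]
  have hcal : cexp μ {ω | f ω = v} (fun ω => Y ω - v) = ybar - v := by
    rw [hpconv, hybar']
    have hnum : (∑ ω : Ω, if f ω = v then μ ω * (Y ω - v) else 0) = SY - v * p := by
      rw [hprEv, hSY, Finset.mul_sum, ← Finset.sum_sub_distrib]
      refine Finset.sum_congr rfl fun ω _ => ?_
      by_cases h : f ω = v
      · simp only [if_pos h]; ring
      · simp only [if_neg h]; ring
    rw [hnum]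
    field_simp
  have hterm : p * (ybar - v) ^ 2 ≤ α := by
    have hsingle := Finset.single_le_sum
      (f := fun w => prEv μ {ω | f ω = w} * (cexp μ {ω | f ω = w} (fun ω => Y ω - w)) ^ 2)
      (fun w _ => by
        have hw : (0 : ℝ) ≤ prEv μ {ω | f ω = w} := by
          simp only [prEv]
          refine Finset.sum_nonneg fun ω _ => ?_
          split
          · exact hμ ω
          · exact le_rfl
        positivity) hvmem
    calc p * (ybar - v) ^ 2
        = prEv μ {ω | f ω = v} * (cexp μ {ω | f ω = v} (fun ω => Y ω - v)) ^ 2 := by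
          rw [hcal]
      _ ≤ _ := hsingle
      _ ≤ α := hK
  have hα0 : 0 ≤ α := le_trans (by positivity) hterm
  have hd : (ybar - v) ^ 2 ≤ γ ^ 2 / 16 := by
    have h1 : (ybar - v) ^ 2 ≤ α / p := by
      rw [le_div_iff₀ hp0]; linarith [hterm]
    have h2 : α / p ≤ α / (γ / m) :=
      div_le_div_of_nonneg_left hα0 (by positivity) hpv.le
    have h3 : α / (γ / m) = α * m / γ := by field_simp
    have h4 : α * m / γ ≤ γ ^ 2 / 16 := by
      rw [div_le_div_iff₀ hγ (by norm_num)]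
      have h5 := mul_le_mul_of_nonneg_right hα (le_of_lt hm0)
      rw [div_mul_eq_mul_div, le_div_iff₀ (by positivity)] at h5
      nlinarith
    linarith
  have hL0 : 0 ≤ cexp μ {ω | f ω = v} (fun ω => (fstar ω - Y ω) ^ 2) := by
    rw [hpconv]
    apply div_nonneg _ hp0.le
    refine Finset.sum_nonneg fun ω _ => ?_
    split
    · exact mul_nonneg (hμ ω) (sq_nonneg _)
    · exact le_rfl
  have hU1 : cexp μ {ω | f ω = v} (fun ω => (f ω - Y ω) ^ 2) ≤ 1 := by
    rw [hpconv, div_le_one hp0, hprEv]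
    refine Finset.sum_le_sum fun ω _ => ?_
    split
    · have h1 := (hf ω).1; have h2 := (hf ω).2
      have h3 := (hY ω).1; have h4 := (hY ω).2
      have hsq1 : (f ω - Y ω) ^ 2 ≤ 1 := by nlinarith
      exact mul_le_of_le_one_right (hμ ω) hsq1
    · exact le_rfl
  have hγhalf : 2 * γ < 1 := by linarith
  have hdγ : (ybar - v) ^ 2 ≤ γ := by nlinarith
  have key : cexp μ {ω | f ω = v} (fun ω => (v - Y ω) ^ 2)
      = cexp μ {ω | f ω = v} (fun ω => (ybar - Y ω) ^ 2) + (v - ybar) ^ 2 := by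
    rw [hca, hca]; ring
  rw [hfv, key] at hsub
  have hsq : (v - ybar) ^ 2 = (ybar - v) ^ 2 := by ring
  linarith
end
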